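/- Let σ ∈ (0,1), let y ≥ 2 be a real number, and let M be a finite set of positive integers such that every prime factor of every element of M is at most y. Then Σ_{m,n ∈ M} (gcd(m,n)/lcm(m,n))^σ ≤ |M| · Π_{p ≤ y, p prime} (1 + 2/(p^σ − 1)). -/

import Mathlib

/-!
Write `a_p, b_p` for the exponents of `p` in `m, n` and `r_p = p^{-σ} < 1`. Then
`(gcd(m,n)/lcm(m,n))^σ = ∏_p r_p^{|a_p - b_p|}`. Since `n` is determined by its exponent vector,
summing over `n ∈ M` is at most summing over all vectors `(b_p)`, which factors into
`∏_p ∑_b r_p^{|a_p - b|} ≤ ∏_p (1 + r_p)/(1 - r_p) = ∏_p (1 + 2/(p^σ - 1))`.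
-/

open Finset

theorem Finset.sum_pow_dist_le {r : ℝ} (hr₀ : 0 ≤ r) (hr₁ : r < 1) (a : ℕ) (T : Finset ℕ) :
    ∑ b ∈ T, r ^ Nat.dist a b ≤ (1 + r) / (1 - r) := by
  set N := T.sup id + 1
  have hT : T ⊆ range (a + N) := fun b hb => by
    have : b ≤ T.sup id := le_sup (f := id) hb
    rw [mem_range]; omega
  calc ∑ b ∈ T, r ^ Nat.dist a b ≤ ∑ b ∈ range (a + N), r ^ Nat.dist a b :=
        sum_le_sum_of_subset_of_nonneg hT fun _ _ _ => pow_nonneg hr₀ _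
    _ = ∑ i ∈ Ico 1 (a + 1), r ^ i + ∑ i ∈ Ico 0 N, r ^ i := by
        rw [sum_range_add, ← sum_range_reflect, sum_Ico_eq_sum_range, sum_Ico_eq_sum_range]
        congr 1 <;> refine sum_congr rfl fun i hi => ?_ <;> rw [mem_range] at hi <;>
          unfold Nat.dist <;> congr 1 <;> omega
    _ ≤ r ^ 1 / (1 - r) + r ^ 0 / (1 - r) :=
        add_le_add (geom_sum_Ico_le_of_lt_one hr₀ hr₁) (geom_sum_Ico_le_of_lt_one hr₀ hr₁)
    _ = (1 + r) / (1 - r) := by ring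

theorem Finset.sum_prod_le_prod_sum_image {α ι β R : Type*} [Fintype ι] [DecidableEq ι]
    [DecidableEq β] [CommSemiring R] [PartialOrder R] [IsOrderedRing R]
    (s : Finset α) (v : α → ι → β) (hv : Set.InjOn v s) (g : ι → β → R)
    (hg : ∀ i b, 0 ≤ g i b) :
    ∑ a ∈ s, ∏ i, g i (v a i) ≤ ∏ i, ∑ b ∈ s.image (v · i), g i b := by
  rw [prod_univ_sum, ← sum_image (f := fun x => ∏ i, g i (x i)) hv]
  refine sum_le_sum_of_subset_of_nonneg ?_ fun _ _ _ => prod_nonneg fun i _ => hg _ _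
  intro x hx
  obtain ⟨a, ha, rfl⟩ := mem_image.1 hx
  exact Fintype.mem_piFinset.2 fun i => mem_image_of_mem _ ha

theorem Nat.prod_pow_factorization_of_primeFactors_subset {n : ℕ} {P : Finset ℕ} (hn : n ≠ 0)
    (hP : n.primeFactors ⊆ P) : ∏ p ∈ P, p ^ n.factorization p = n := by
  rw [← Finsupp.prod_of_support_subset _ (by rwa [Nat.support_factorization]) _
    fun _ _ => pow_zero _]
  exact Nat.prod_factorization_pow_eq_self hn

theorem Nat.lcm_eq_gcd_mul_prod_pow_dist {m n : ℕ} {P : Finset ℕ} (hm : m ≠ 0) (hn : n ≠ 0)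
    (hmP : m.primeFactors ⊆ P) (hnP : n.primeFactors ⊆ P) :
    m.lcm n = m.gcd n * ∏ p ∈ P, p ^ Nat.dist (m.factorization p) (n.factorization p) := by
  have hgP : (m.gcd n).primeFactors ⊆ P :=
    (Nat.primeFactors_mono (Nat.gcd_dvd_left m n) hm).trans hmP
  have hlP : (m.lcm n).primeFactors ⊆ P := by
    refine (Nat.primeFactors_mono (Nat.lcm_dvd_mul m n) (mul_ne_zero hm hn)).trans ?_
    rw [Nat.primeFactors_mul hm hn]
    exact union_subset hmP hnP
  rw [← prod_pow_factorization_of_primeFactors_subset (Nat.lcm_ne_zero hm hn) hlP,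
    ← prod_pow_factorization_of_primeFactors_subset (Nat.gcd_ne_zero_left hm) hgP,
    ← prod_mul_distrib, Nat.factorization_lcm hm hn, Nat.factorization_gcd hm hn]
  refine prod_congr rfl fun p _ => ?_
  rw [Finsupp.sup_apply, Finsupp.inf_apply, ← pow_add]
  unfold Nat.dist
  congr 1
  omega

theorem Nat.gcd_div_lcm_rpow_eq_prod {m n : ℕ} {P : Finset ℕ} (hm : m ≠ 0) (hn : n ≠ 0)
    (hmP : m.primeFactors ⊆ P) (hnP : n.primeFactors ⊆ P) (σ : ℝ) :
    ((m.gcd n : ℝ) / (m.lcm n : ℝ)) ^ σ =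
      ∏ p ∈ P, ((p : ℝ) ^ σ)⁻¹ ^ Nat.dist (m.factorization p) (n.factorization p) := by
  have hg : (m.gcd n : ℝ) ≠ 0 := Nat.cast_ne_zero.2 (Nat.gcd_ne_zero_left hm)
  rw [lcm_eq_gcd_mul_prod_pow_dist hm hn hmP hnP, Nat.cast_mul, div_mul_cancel_left₀ hg,
    Nat.cast_prod, ← prod_inv_distrib,
    ← Real.finsetProd_rpow _ _ fun p _ => by positivity]
  refine prod_congr rfl fun p _ => ?_
  push_cast
  rw [Real.inv_rpow (by positivity), ← Real.rpow_pow_comm (Nat.cast_nonneg p), inv_pow]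

theorem one_add_inv_div_one_sub_inv {x : ℝ} (hx : 1 < x) :
    (1 + x⁻¹) / (1 - x⁻¹) = 1 + 2 / (x - 1) := by
  have : x - 1 ≠ 0 := by linarith
  field_simp
  ring

theorem Nat.injOn_factorization_of_primeFactors_subset {M P : Finset ℕ}
    (hM₀ : ∀ n ∈ M, n ≠ 0) (hMP : ∀ n ∈ M, n.primeFactors ⊆ P) :
    Set.InjOn (fun (n : ℕ) (p : P) => n.factorization p) M := fun n hn n' hn' h => calc
  n = ∏ p ∈ P, p ^ n.factorization p :=
    (prod_pow_factorization_of_primeFactors_subset (hM₀ n hn) (hMP n hn)).symm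
  _ = ∏ p ∈ P, p ^ n'.factorization p := prod_congr rfl fun p hp => by
    rw [show n.factorization p = n'.factorization p from congrFun h ⟨p, hp⟩]
  _ = n' := prod_pow_factorization_of_primeFactors_subset (hM₀ n' hn') (hMP n' hn')

theorem Nat.sum_gcd_div_lcm_rpow_le {σ : ℝ} (hσ : 0 < σ) {M P : Finset ℕ}
    (hP : ∀ p ∈ P, 1 < p) (hM₀ : ∀ n ∈ M, n ≠ 0) (hMP : ∀ n ∈ M, n.primeFactors ⊆ P)
    {m : ℕ} (hm : m ≠ 0) (hmP : m.primeFactors ⊆ P) :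
    ∑ n ∈ M, ((m.gcd n : ℝ) / (m.lcm n : ℝ)) ^ σ ≤ ∏ p ∈ P, (1 + 2 / ((p : ℝ) ^ σ - 1)) := by
  have hpσ : ∀ p ∈ P, 1 < (p : ℝ) ^ σ := fun p hp =>
    Real.one_lt_rpow (by exact_mod_cast hP p hp) hσ
  calc _ = ∑ n ∈ M, ∏ p : P, ((p : ℝ) ^ σ)⁻¹ ^ Nat.dist (m.factorization p) (n.factorization p) :=
        sum_congr rfl fun n hn => by
          rw [gcd_div_lcm_rpow_eq_prod hm (hM₀ n hn) hmP (hMP n hn), ← prod_coe_sort]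
    _ ≤ ∏ p : P, ∑ b ∈ M.image (·.factorization p),
          ((p : ℝ) ^ σ)⁻¹ ^ Nat.dist (m.factorization p) b :=
        sum_prod_le_prod_sum_image M _ (injOn_factorization_of_primeFactors_subset hM₀ hMP)
          (fun (p : P) b => ((p : ℝ) ^ σ)⁻¹ ^ Nat.dist (m.factorization p) b)
          fun _ _ => pow_nonneg (by positivity) _
    _ ≤ ∏ p : P, (1 + ((p : ℝ) ^ σ)⁻¹) / (1 - ((p : ℝ) ^ σ)⁻¹) :=
        prod_le_prod (fun _ _ => sum_nonneg fun _ _ => pow_nonneg (by positivity) _)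
          fun p _ => sum_pow_dist_le (by positivity) (inv_lt_one_of_one_lt₀ (hpσ p p.2)) _ _
    _ = ∏ p ∈ P, (1 + 2 / ((p : ℝ) ^ σ - 1)) :=
        (prod_coe_sort P fun p : ℕ => (1 + ((p : ℝ) ^ σ)⁻¹) / (1 - ((p : ℝ) ^ σ)⁻¹)).trans
          (prod_congr rfl fun p hp => one_add_inv_div_one_sub_inv (hpσ p hp))

theorem stmt_9_general (σ : ℝ) (hσ : σ ∈ Set.Ioo (0 : ℝ) 1) (y : ℝ)
    (M : Finset ℕ) (hpos : ∀ m ∈ M, 0 < m)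
    (hsmooth : ∀ m ∈ M, ∀ p : ℕ, p.Prime → p ∣ m → (p : ℝ) ≤ y) :
    ∑ m ∈ M, ∑ n ∈ M, ((Nat.gcd m n : ℝ) / (Nat.lcm m n : ℝ)) ^ σ ≤
      (M.card : ℝ) *
        ∏ p ∈ (Finset.Icc 1 ⌊y⌋₊).filter Nat.Prime, (1 + 2 / ((p : ℝ) ^ σ - 1)) := by
  set P := (Finset.Icc 1 ⌊y⌋₊).filter Nat.Prime
  have hP : ∀ p ∈ P, 1 < p := fun p hp => (mem_filter.1 hp).2.one_lt
  have hM₀ : ∀ n ∈ M, n ≠ 0 := fun n hn => (hpos n hn).ne'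
  have hMP : ∀ n ∈ M, n.primeFactors ⊆ P := fun n hn p hp => by
    obtain ⟨hp, hpn, -⟩ := Nat.mem_primeFactors.1 hp
    exact mem_filter.2 ⟨mem_Icc.2 ⟨hp.one_le, Nat.le_floor (hsmooth n hn p hp hpn)⟩, hp⟩
  calc _ ≤ ∑ _m ∈ M, ∏ p ∈ P, (1 + 2 / ((p : ℝ) ^ σ - 1)) :=
        sum_le_sum fun m hm => Nat.sum_gcd_div_lcm_rpow_le hσ.1 hP hM₀ hMP (hM₀ m hm) (hMP m hm)
    _ = _ := by rw [sum_const, nsmul_eq_mul]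

/-- Let `σ ∈ (0,1)`, let `y ≥ 2` be a real number, and let `M` be a finite set of positive
integers such that every prime factor of every element of `M` is at most `y`. Then
`Σ_{m,n ∈ M} (gcd(m,n)/lcm(m,n))^σ ≤ |M| · Π_{p ≤ y prime} (1 + 2/(p^σ − 1))`. -/
theorem stmt_9 (σ : ℝ) (hσ : σ ∈ Set.Ioo (0 : ℝ) 1) (y : ℝ) (hy : 2 ≤ y)
    (M : Finset ℕ) (hpos : ∀ m ∈ M, 0 < m)
    (hsmooth : ∀ m ∈ M, ∀ p : ℕ, p.Prime → p ∣ m → (p : ℝ) ≤ y) :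
    ∑ m ∈ M, ∑ n ∈ M, ((Nat.gcd m n : ℝ) / (Nat.lcm m n : ℝ)) ^ σ ≤
      (M.card : ℝ) *
        ∏ p ∈ (Finset.Icc 1 ⌊y⌋₊).filter Nat.Prime, (1 + 2 / ((p : ℝ) ^ σ - 1)) :=
  stmt_9_general σ hσ y M hpos hsmooth
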